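/- Heisenberg principle for general information transfer: let Q ∈ B(K) be an orthogonal projection and E ∈ B(H) an orthogonal projection with E ≠ 0 and E ≠ 1. Suppose δ, Δ ∈ [0, 1/2], suppose ‖T(1 ⊗ Q) − E‖ ≤ δ, and suppose that for every orthogonal projection P ∈ B(H) one has ‖R(P) − P‖ ≤ Δ. Then (1/2 − δ)² + (1/2 − Δ)² ≤ 1/4. -/

import Mathlib

/-! Take unit vectors `ψ ∈ ran E`, `φ ∈ ker E` and let `P` project onto `(ψ + φ)/√2`; the
reflection `2P - 1` swaps `ψ` and `φ`. As `R(P)` is within `Δ` of `P`, the unitary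
`W = 2 ι₁(P) - 1` satisfies `Re ⟪Vψ, W Vφ⟫ ≥ 1 - 2Δ`. Since `W` commutes with the pointer
projection `Y = ι₂(Q)`, this matrix element splits over `ran Y` and `ker Y` and is at most
`AB + CD`, where `A, C` and `B, D` are the lengths of the components of `Vψ` and `Vφ`.
Good measurement gives `A² ≥ 1 - δ` and `B² ≤ δ`, and `A² + C² = B² + D² = 1` forces
`(AB + CD)² + (A² - B²)² ≤ 1`, whence `(1 - 2Δ)² + (1 - 2δ)² ≤ 1`. -/

open ContinuousLinearMap

/-! The Hilbert tensor product `H ⊗ K` is modelled by a Hilbert space `L` together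
with two commuting unital ⋆-homomorphisms `ι₁ : B(H) → B(L)` and `ι₂ : B(K) → B(L)`
(playing the roles of `X ↦ X ⊗ 1` and `Y ↦ 1 ⊗ Y`). Given an isometry
`V : H → L`, the quantum operation is `T(X) = V† X V` and its restriction to the
system is `R(P) = T(ι₁ P)`. -/

variable {H K L : Type*}
  [NormedAddCommGroup H] [InnerProductSpace ℂ H] [CompleteSpace H]
  [NormedAddCommGroup K] [InnerProductSpace ℂ K] [CompleteSpace K]
  [NormedAddCommGroup L] [InnerProductSpace ℂ L] [CompleteSpace L]

/-- The quantum operation `T(X) = V† X V` in Stinespring form. -/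
noncomputable def qop (V : H →L[ℂ] L) (X : L →L[ℂ] L) : H →L[ℂ] H :=
  adjoint V ∘L X ∘L V

section RealInequality

lemma sq_mul_add_mul_add_sq_sub_sq_le_one {A B C D : ℝ} (hA : A ^ 2 + C ^ 2 = 1)
    (hB : B ^ 2 + D ^ 2 = 1) : (A * B + C * D) ^ 2 + (A ^ 2 - B ^ 2) ^ 2 ≤ 1 := by
  have hrot : (A * B + C * D) ^ 2 + (A * D - B * C) ^ 2 = 1 := by
    linear_combination (B ^ 2 + D ^ 2) * hA + hB
  have hdiff : A ^ 2 - B ^ 2 = (A * D - B * C) * (A * D + B * C) := by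
    linear_combination B ^ 2 * hA - A ^ 2 * hB
  have hsum : (A * D + B * C) ^ 2 ≤ 1 := by
    nlinarith [sq_nonneg (A * B - C * D)]
  rw [hdiff, mul_pow]
  nlinarith [sq_nonneg (A * D - B * C)]

lemma one_half_sub_sq_add_one_half_sub_sq_le {A B C D δ Δ : ℝ} (hA : A ^ 2 + C ^ 2 = 1)
    (hB : B ^ 2 + D ^ 2 = 1) (hAδ : 1 - δ ≤ A ^ 2) (hBδ : B ^ 2 ≤ δ) (hδ : δ ≤ 1 / 2)
    (hΔ : Δ ≤ 1 / 2) (hABCD : 1 - 2 * Δ ≤ A * B + C * D) :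
    (1 / 2 - δ) ^ 2 + (1 / 2 - Δ) ^ 2 ≤ 1 / 4 := by
  have h := sq_mul_add_mul_add_sq_sub_sq_le_one hA hB
  have hδ' : (1 - 2 * δ) ^ 2 ≤ (A ^ 2 - B ^ 2) ^ 2 := pow_le_pow_left₀ (by linarith) (by linarith) 2
  have hΔ' : (1 - 2 * Δ) ^ 2 ≤ (A * B + C * D) ^ 2 := pow_le_pow_left₀ (by linarith) hABCD 2
  nlinarith

end RealInequality

section StarProjection

variable {𝕜 E : Type*} [RCLike 𝕜] [NormedAddCommGroup E] [InnerProductSpace 𝕜 E]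

lemma abs_re_inner_apply_sub_le (S T : E →L[𝕜] E) (x y : E) :
    |RCLike.re (inner 𝕜 x (S y)) - RCLike.re (inner 𝕜 x (T y))| ≤ ‖x‖ * ‖S - T‖ * ‖y‖ := by
  rw [← map_sub, ← inner_sub_right, ← sub_apply, mul_assoc]
  grw [RCLike.abs_re_le_norm, norm_inner_le_norm, ContinuousLinearMap.le_opNorm]

variable [CompleteSpace E] {p : E →L[𝕜] E}

namespace IsStarProjection

lemma inner_apply_left (hp : IsStarProjection p) (u v : E) :
    inner 𝕜 (p u) v = inner 𝕜 u (p v) :=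
  hp.isSelfAdjoint.isSymmetric u v

lemma apply_apply (hp : IsStarProjection p) (v : E) : p (p v) = p v := by
  rw [← mul_apply_eq_comp, hp.isIdempotentElem.eq]

lemma re_inner_self_apply (hp : IsStarProjection p) (v : E) :
    RCLike.re (inner 𝕜 v (p v)) = ‖p v‖ ^ 2 := by
  rw [← hp.apply_apply, ← hp.inner_apply_left, hp.apply_apply, inner_self_eq_norm_sq]

lemma norm_sq_add_norm_sq_one_sub (hp : IsStarProjection p) (v : E) :
    ‖p v‖ ^ 2 + ‖(1 - p) v‖ ^ 2 = ‖v‖ ^ 2 := by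
  have horth : inner 𝕜 (p v) ((1 - p) v) = 0 := by
    rw [hp.inner_apply_left, ← mul_apply_eq_comp, hp.mul_one_sub_self,
      zero_apply, inner_zero_right]
  have hsplit : p v + (1 - p) v = v := by simp
  simpa only [sq, hsplit] using (norm_add_sq_eq_norm_sq_add_norm_sq_of_inner_eq_zero _ _ horth).symm

lemma exists_norm_eq_one_apply_eq (hp : IsStarProjection p) (hp0 : p ≠ 0) :
    ∃ x : E, ‖x‖ = 1 ∧ p x = x := by
  obtain ⟨y, hy⟩ : ∃ y, p y ≠ 0 := by
    by_contra! h
    exact hp0 (ContinuousLinearMap.ext h)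
  exact ⟨(‖p y‖⁻¹ : 𝕜) • p y, norm_smul_inv_norm hy, by rw [map_smul, hp.apply_apply]⟩

lemma inner_apply_map_apply (hp : IsStarProjection p) {W : E →L[𝕜] E} (hW : Commute p W)
    (u v : E) : inner 𝕜 (p u) (W (p v)) = inner 𝕜 u ((W * p) v) := by
  rw [hp.inner_apply_left, ← mul_apply_eq_comp, ← mul_apply_eq_comp,
    hW.eq, mul_assoc, hp.isIdempotentElem.eq]

lemma norm_inner_map_le (hp : IsStarProjection p) {W : E →L[𝕜] E} (hW : Commute p W)
    (hW1 : ‖W‖ ≤ 1) (u v : E) :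
    ‖inner 𝕜 u (W v)‖ ≤ ‖p u‖ * ‖p v‖ + ‖(1 - p) u‖ * ‖(1 - p) v‖ := by
  have hsplit : inner 𝕜 u (W v) =
      inner 𝕜 (p u) (W (p v)) + inner 𝕜 ((1 - p) u) (W ((1 - p) v)) := by
    rw [hp.inner_apply_map_apply hW,
      hp.one_sub.inner_apply_map_apply ((Commute.one_left W).sub_left hW), ← inner_add_right, ← add_apply, ← mul_add, add_sub_cancel, mul_one]
  have hcontr (x y : E) : ‖inner 𝕜 x (W y)‖ ≤ ‖x‖ * ‖y‖ :=
    calc ‖inner 𝕜 x (W y)‖ ≤ ‖x‖ * (‖W‖ * ‖y‖) := by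
          grw [norm_inner_le_norm, W.le_opNorm]
      _ ≤ ‖x‖ * ‖y‖ := by grw [hW1, one_mul]
  rw [hsplit]
  exact (norm_add_le _ _).trans (add_le_add (hcontr _ _) (hcontr _ _))

end IsStarProjection

lemma exists_isStarProjection_inner_eq_half {ψ φ : E} (hψ : ‖ψ‖ = 1) (hφ : ‖φ‖ = 1)
    (hψφ : inner 𝕜 ψ φ = 0) : ∃ P : E →L[𝕜] E, IsStarProjection P ∧ inner 𝕜 ψ (P φ) = 1 / 2 := by
  have hnorm : ‖ψ + φ‖ ^ 2 = 2 := by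
    rw [sq, norm_add_sq_eq_norm_sq_add_norm_sq_of_inner_eq_zero _ _ hψφ, hψ, hφ]
    norm_num
  refine ⟨(𝕜 ∙ (ψ + φ)).starProjection, isStarProjection_starProjection, ?_⟩
  rw [Submodule.starProjection_singleton, hnorm, inner_smul_right, inner_add_left,
    inner_add_right, hψφ, inner_self_eq_norm_sq_to_K, inner_self_eq_norm_sq_to_K, hψ, hφ]
  push_cast
  ring

end StarProjection

section Stinespring

variable {V : H →L[ℂ] L}

lemma inner_qop_apply (V : H →L[ℂ] L) (X : L →L[ℂ] L) (x y : H) :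
    inner ℂ x (qop V X y) = inner ℂ (V x) (X (V y)) :=
  adjoint_inner_right V x (X (V y))

lemma abs_norm_sq_map_sub_norm_sq_le {Y : L →L[ℂ] L} {E : H →L[ℂ] H} (hY : IsStarProjection Y)
    (hE : IsStarProjection E) {x : H} (hx : ‖x‖ = 1) :
    |‖Y (V x)‖ ^ 2 - ‖E x‖ ^ 2| ≤ ‖qop V Y - E‖ := by
  rw [← hY.re_inner_self_apply, ← inner_qop_apply, ← hE.re_inner_self_apply (𝕜 := ℂ)]
  simpa [hx] using abs_re_inner_apply_sub_le (qop V Y) E x x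

lemma one_sub_two_mul_norm_qop_sub_le_re_inner (hV : adjoint V ∘L V = 1) {X : L →L[ℂ] L}
    {P : H →L[ℂ] H} {ψ φ : H} (hψ : ‖ψ‖ = 1) (hφ : ‖φ‖ = 1) (hψφ : inner ℂ ψ φ = 0)
    (hP : inner ℂ ψ (P φ) = 1 / 2) :
    1 - 2 * ‖qop V X - P‖ ≤ RCLike.re (inner ℂ (V ψ) ((2 * X - 1) (V φ))) := by
  have h := abs_le.1 (abs_re_inner_apply_sub_le (qop V X) P ψ φ)
  rw [hψ, hφ, one_mul, mul_one, hP, show RCLike.re (1 / 2 : ℂ) = 1 / 2 by norm_num] at h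
  have hsplit : inner ℂ (V ψ) ((2 * X - 1) (V φ)) = 2 * inner ℂ ψ (qop V X φ) := by
    simp [sub_apply, two_mul, add_apply, inner_qop_apply,
      (inner_map_map_iff_adjoint_comp_self V).2 hV, hψφ]
  rw [hsplit, RCLike.ofNat_mul_re]
  linarith [h.1]

end Stinespring

/-- Heisenberg principle for general information transfer: if the pointer projection
`Q` reproduces the nontrivial projection `E` up to `δ`, and every projection is
disturbed by at most `Δ`, with `δ, Δ ∈ [0, 1/2]`, then
`(1/2 − δ)² + (1/2 − Δ)² ≤ 1/4`. -/
theorem heisenberg_general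
    (ι₁ : (H →L[ℂ] H) →⋆ₐ[ℂ] (L →L[ℂ] L)) (ι₂ : (K →L[ℂ] K) →⋆ₐ[ℂ] (L →L[ℂ] L))
    (hcomm : ∀ X Y, ι₁ X * ι₂ Y = ι₂ Y * ι₁ X)
    (V : H →L[ℂ] L) (hV : adjoint V ∘L V = 1)
    (Q : K →L[ℂ] K) (hQproj : IsIdempotentElem Q) (hQsa : IsSelfAdjoint Q)
    (E : H →L[ℂ] H) (hEproj : IsIdempotentElem E) (hEsa : IsSelfAdjoint E)
    (hE0 : E ≠ 0) (hE1 : E ≠ 1)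
    (δ Δ : ℝ) (hδ : δ ∈ Set.Icc (0 : ℝ) (1 / 2)) (hΔ : Δ ∈ Set.Icc (0 : ℝ) (1 / 2))
    (hinfid : ‖qop V (ι₂ Q) - E‖ ≤ δ)
    (hdist : ∀ P : H →L[ℂ] H, IsIdempotentElem P → IsSelfAdjoint P →
      ‖qop V (ι₁ P) - P‖ ≤ Δ) :
    (1 / 2 - δ) ^ 2 + (1 / 2 - Δ) ^ 2 ≤ 1 / 4 := by
  have hE : IsStarProjection E := ⟨hEproj, hEsa⟩
  have hY : IsStarProjection (ι₂ Q) := IsStarProjection.map ⟨hQproj, hQsa⟩ ι₂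
  obtain ⟨ψ, hψ, hEψ⟩ := hE.exists_norm_eq_one_apply_eq hE0
  obtain ⟨φ, hφ, hEφ⟩ := hE.one_sub.exists_norm_eq_one_apply_eq (sub_ne_zero.2 hE1.symm)
  have hEφ0 : E φ = 0 := by rw [← hEφ, ← mul_apply_eq_comp, hE.mul_one_sub_self, zero_apply]
  have hψφ : inner ℂ ψ φ = 0 := by rw [← hEψ, hE.inner_apply_left, hEφ0, inner_zero_right]
  have hψY := abs_le.1 ((abs_norm_sq_map_sub_norm_sq_le (V := V) hY hE hψ).trans hinfid)
  have hφY := abs_le.1 ((abs_norm_sq_map_sub_norm_sq_le (V := V) hY hE hφ).trans hinfid)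
  rw [hEψ, hψ, one_pow] at hψY
  rw [hEφ0, norm_zero, zero_pow two_ne_zero, sub_zero] at hφY
  obtain ⟨P, hP, hPψφ⟩ := exists_isStarProjection_inner_eq_half hψ hφ hψφ
  set W := 2 * ι₁ P - 1
  have hW1 : ‖W‖ ≤ 1 := opNorm_le_bound _ zero_le_one fun x => by
    rw [norm_map_of_mem_unitary (hP.map ι₁).two_mul_sub_one_mem_unitary, one_mul]
  have hYW : Commute (ι₂ Q) W :=
    ((Commute.ofNat_right _ 2).mul_right (hcomm P Q).symm).sub_right (Commute.one_right _)
  have hunit (x : H) (hx : ‖x‖ = 1) : ‖ι₂ Q (V x)‖ ^ 2 + ‖(1 - ι₂ Q) (V x)‖ ^ 2 = 1 := by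
    rw [hY.norm_sq_add_norm_sq_one_sub, (norm_map_iff_adjoint_comp_self V).2 hV, hx, one_pow]
  refine one_half_sub_sq_add_one_half_sub_sq_le (hunit ψ hψ) (hunit φ hφ) (by linarith [hψY.1])
    hφY.2 hδ.2 hΔ.2 ?_
  calc 1 - 2 * Δ
      ≤ 1 - 2 * ‖qop V (ι₁ P) - P‖ := by linarith [hdist P hP.isIdempotentElem hP.isSelfAdjoint]
    _ ≤ RCLike.re (inner ℂ (V ψ) (W (V φ))) :=
        one_sub_two_mul_norm_qop_sub_le_re_inner hV hψ hφ hψφ hPψφ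
    _ ≤ ‖inner ℂ (V ψ) (W (V φ))‖ := RCLike.re_le_norm _
    _ ≤ _ := hY.norm_inner_map_le hYW hW1 (V ψ) (V φ)
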